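/- Let c be a positive integer, let F be a double-fan on at least 8c² + 2c + 1 vertices with centres v₁, v₂, and let 𝒫, 𝒬 be partitions of F such that 𝒫 is a tree-partition and |P ∩ Q| ≤ c for all P ∈ 𝒫 and Q ∈ 𝒬. If v₁ and v₂ lie in distinct parts of 𝒫 and in distinct parts of 𝒬, then there exist vertices v₃, v₄ such that {v₁, v₂, v₃, v₄} is a 4-clique in F and the parts of 𝒬 containing v₁, v₂, v₃, v₄ are pairwise distinct. -/

import Mathlib

open SimpleGraph

/-- `H` is isomorphic to a subgraph of `G`. -/
def Contains {α β : Type} (H : SimpleGraph α) (G : SimpleGraph β) : Prop :=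
  ∃ f : α ↪ β, ∀ ⦃u v⦄, H.Adj u v → G.Adj (f u) (f v)

/-- The strong product of two graphs. -/
def StrongProd {α β : Type} (G : SimpleGraph α) (H : SimpleGraph β) :
    SimpleGraph (α × β) where
  Adj x y := x ≠ y ∧ (x.1 = y.1 ∨ G.Adj x.1 y.1) ∧ (x.2 = y.2 ∨ H.Adj x.2 y.2)
  symm := ⟨by
    rintro x y ⟨h1, h2, h3⟩
    exact ⟨h1.symm, h2.imp Eq.symm SimpleGraph.Adj.symm, h3.imp Eq.symm SimpleGraph.Adj.symm⟩⟩
  loopless := ⟨fun x h => h.1 rfl⟩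

/-- `H` is a minor of `G`, witnessed by disjoint connected branch sets. -/
def IsMinorOf {α β : Type} (H : SimpleGraph α) (G : SimpleGraph β) : Prop :=
  ∃ B : α → Set β,
    (∀ a, (G.induce (B a)).Connected) ∧
    (Pairwise fun a b => Disjoint (B a) (B b)) ∧
    (∀ ⦃a b⦄, H.Adj a b → ∃ x ∈ B a, ∃ y ∈ B b, G.Adj x y)

/-- A graph is planar iff it has no `K₅` minor and no `K₃,₃` minor (Wagner's theorem). -/
def IsPlanar {α : Type} (G : SimpleGraph α) : Prop :=
  ¬ IsMinorOf (completeGraph (Fin 5)) G ∧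
  ¬ IsMinorOf (completeBipartiteGraph (Fin 3) (Fin 3)) G

/-- `G` has a tree-decomposition of width at most `k`. -/
def HasTreewidthLE {α : Type} (G : SimpleGraph α) (k : ℕ) : Prop :=
  ∃ (ι : Type) (T : SimpleGraph ι) (B : ι → Set α),
    T.IsTree ∧
    (∀ ⦃u v⦄, G.Adj u v → ∃ i, u ∈ B i ∧ v ∈ B i) ∧
    (∀ v, (T.induce {i | v ∈ B i}).Connected) ∧
    (∀ i, (B i).Finite ∧ (B i).ncard ≤ k + 1)

/-- `G` has a path-decomposition of width at most `k`. -/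
def HasPathwidthLE {α : Type} (G : SimpleGraph α) (k : ℕ) : Prop :=
  ∃ (m : ℕ) (B : Fin m → Set α),
    (∀ ⦃u v⦄, G.Adj u v → ∃ i, u ∈ B i ∧ v ∈ B i) ∧
    (∀ v, ∃ i, v ∈ B i) ∧
    (∀ v (i j l : Fin m), i ≤ j → j ≤ l → v ∈ B i → v ∈ B l → v ∈ B j) ∧
    (∀ i, (B i).Finite ∧ (B i).ncard ≤ k + 1)

/-- The quotient of `G` by a family of sets of vertices: vertices are the members of `P`,
two parts being adjacent iff some pair of representatives is adjacent in `G`. -/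
def QuotientGraph {α : Type} (G : SimpleGraph α) (P : Set (Set α)) :
    SimpleGraph P where
  Adj A B := A ≠ B ∧ ∃ a ∈ (A : Set α), ∃ b ∈ (B : Set α), G.Adj a b
  symm := ⟨by
    rintro A B ⟨h1, a, ha, b, hb, hab⟩
    exact ⟨h1.symm, b, hb, a, ha, hab.symm⟩⟩
  loopless := ⟨fun A h => h.1 rfl⟩

/-- A partition of the vertices of `G` is a tree-partition if the quotient graph is
contained in a tree. -/
def IsTreePartition {α : Type} (G : SimpleGraph α) (P : Set (Set α)) : Prop :=
  Setoid.IsPartition P ∧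
  ∃ (ι : Type) (T : SimpleGraph ι), T.IsTree ∧ Contains (QuotientGraph G P) T

/-- A matching: a set of edges of `G`, pairwise not sharing a vertex. -/
def IsMatchingSet {α : Type} (G : SimpleGraph α) (M : Set (Sym2 α)) : Prop :=
  M ⊆ G.edgeSet ∧ M.Pairwise fun e f => ∀ v, v ∈ e → v ∉ f

/-- The parts obtained from a matching: matched pairs and singletons of unmatched vertices. -/
def matchingParts {α : Type} (M : Set (Sym2 α)) : Set (Set α) :=
  {S | (∃ e ∈ M, S = {x | x ∈ e}) ∨ ∃ v, (∀ e ∈ M, v ∉ e) ∧ S = {v}}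

/-- The graph `G/M` obtained by contracting each edge of a matching `M`. -/
def ContractMatching {α : Type} (G : SimpleGraph α) (M : Set (Sym2 α)) :
    SimpleGraph (matchingParts M) :=
  QuotientGraph G (matchingParts M)

/-- A graph is a path graph if it is isomorphic to `pathGraph n` for some `n`. -/
def IsPathGraph {α : Type} (G : SimpleGraph α) : Prop :=
  ∃ n : ℕ, Nonempty (G ≃g SimpleGraph.pathGraph n)

/-- A graph in which every cycle is a triangle. -/
def IsTriangleForest {α : Type} (G : SimpleGraph α) : Prop :=
  ∀ (v : α) (w : G.Walk v v), w.IsCycle → w.length = 3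

/-- `G` is `k`-apex: removing at most `k` vertices leaves a planar graph. -/
def IsKApex {α : Type} (G : SimpleGraph α) (k : ℕ) : Prop :=
  ∃ A : Set α, A.ncard ≤ k ∧ IsPlanar (G.induce Aᶜ)

/-- `G` is an apex-forest: removing at most one vertex leaves a forest. -/
def IsApexForest {α : Type} (G : SimpleGraph α) : Prop :=
  ∃ A : Set α, A.ncard ≤ 1 ∧ (G.induce Aᶜ).IsAcyclic

/-- `G⁺`: the graph `G` together with one new dominant vertex. -/
def AddDominant {α : Type} (G : SimpleGraph α) : SimpleGraph (Option α) where
  Adj x y := match x, y with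
    | some a, some b => G.Adj a b
    | some _, none => True
    | none, some _ => True
    | none, none => False
  symm := ⟨by rintro (_|a) (_|b) h <;> simp_all [SimpleGraph.Adj.symm, adj_symm]⟩
  loopless := ⟨by rintro (_|a) h <;> simp_all⟩

/-- `G'` is a distension of `G`: for each edge `vw` of `G`, a non-empty path, complete
to `{v, w}`, is added, with the added paths disjoint from `G` and from each other. -/
def IsDistension {α β : Type} (G : SimpleGraph α) (G' : SimpleGraph β) : Prop :=
  ∃ (g : α ↪ β) (f : β → Sym2 α),
    (∀ u v : α, G'.Adj (g u) (g v) ↔ G.Adj u v) ∧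
    (∀ w : β, w ∉ Set.range g → f w ∈ G.edgeSet) ∧
    (∀ w : β, w ∉ Set.range g → ∀ v : α, (G'.Adj w (g v) ↔ v ∈ f w)) ∧
    (∀ w w' : β, w ∉ Set.range g → w' ∉ Set.range g → G'.Adj w w' → f w = f w') ∧
    (∀ e ∈ G.edgeSet, {w : β | w ∉ Set.range g ∧ f w = e}.Nonempty ∧
      IsPathGraph (G'.induce {w : β | w ∉ Set.range g ∧ f w = e}))

/-!
Since `v₁` and `v₂` are adjacent, dominant and in distinct parts of the tree-partition `𝒫`, every
other vertex `w` lies in the part of `v₁` or of `v₂`: otherwise `v₁ v₂ w` would give a triangle in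
the tree containing `F/𝒫`. Hence every part of `𝒬` meets only two parts of `𝒫` and has at most
`2c` vertices. Now walk along the path `F - v₁ - v₂`, which has `n ≥ 8c² + 2c - 1` vertices, and
call a path vertex forbidden if it shares a part of `𝒬` with `v₁` or `v₂`; there are at most
`4c - 2` of them. If no edge of the path joins two non-forbidden vertices in distinct parts of `𝒬`,
every `2c + 1` consecutive path vertices contain a forbidden one (otherwise they all lie in one
part of size at most `2c`), which forces `n < (4c - 1)(2c + 1)`. So some path edge `v₃v₄` works.
-/

open Finset

/-- The windows `[m (k + 1), (m + 1) (k + 1))`, `m ≤ #B`, are disjoint, and `j ↦ j / (k + 1)`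
sends a point of `B` in the `m`-th window to `m`. -/
theorem lt_mul_of_forall_window_meets {B : Finset ℕ} {n k : ℕ}
    (h : ∀ a, a + k < n → ∃ j ∈ B, a ≤ j ∧ j ≤ a + k) : n < (#B + 1) * (k + 1) := by
  by_contra! hn
  have hsub : range (#B + 1) ⊆ B.image (· / (k + 1)) := by
    intro m hm
    have hm : m + 1 ≤ #B + 1 := mem_range.1 hm
    have hwin : m * (k + 1) + k < n := by
      have := Nat.mul_le_mul_right (k + 1) hm
      rw [add_mul, one_mul] at this
      omega
    obtain ⟨j, hjB, hmj, hjm⟩ := h _ hwin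
    exact mem_image.2 ⟨j, hjB, Nat.div_eq_of_lt_le hmj (by rw [add_mul, one_mul]; omega)⟩
  simpa using (card_le_card hsub).trans card_image_le

theorem exists_succ_ne_of_card_filter_le {ι : Type*} [DecidableEq ι] (f : ℕ → ι) (s : Set ι)
    [DecidablePred (f · ∈ s)] {n b k : ℕ} (hs : #{j ∈ range n | f j ∈ s} ≤ b)
    (hfib : ∀ j < n, #{j' ∈ range n | f j' = f j} ≤ k) (hn : (b + 1) * (k + 1) ≤ n) :
    ∃ j, j + 1 < n ∧ f j ∉ s ∧ f (j + 1) ∉ s ∧ f j ≠ f (j + 1) := by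
  by_contra! hcon
  -- a run of `k + 1` indices avoiding `s` would be constant, overfilling a fibre of `f`
  have hwin : ∀ a, a + k < n → ∃ j ∈ {j ∈ range n | f j ∈ s}, a ≤ j ∧ j ≤ a + k := by
    intro a ha
    by_contra! hfree
    have hout : ∀ t ≤ k, f (a + t) ∉ s := fun t ht hmem =>
      absurd (hfree (a + t) (mem_filter.2 ⟨mem_range.2 (by omega), hmem⟩) le_self_add) (by omega)
    have hconst : ∀ t ≤ k, f (a + t) = f a := by
      intro t ht
      induction t with
      | zero => rfl
      | succ t ih =>
        rw [← ih (by omega)]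
        exact (hcon (a + t) (by omega) (hout t (by omega)) (hout (t + 1) ht)).symm
    have hrun : (range (k + 1)).image (a + ·) ⊆ {j' ∈ range n | f j' = f a} := by
      intro j hj
      obtain ⟨t, ht, rfl⟩ := mem_image.1 hj
      exact mem_filter.2 ⟨mem_range.2 (by simp at ht; omega), hconst t (by simp at ht; omega)⟩
    have := (card_le_card hrun).trans (hfib a (by omega))
    rw [card_image_of_injective _ (add_right_injective a), card_range] at this
    omega
  have := (lt_mul_of_forall_window_meets hwin).trans_le
    (Nat.mul_le_mul_right (k + 1) (Nat.add_le_add_right hs 1))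
  omega

theorem card_filter_mem_le_ncard {α : Type*} [Fintype α] {u : ℕ → α} {n : ℕ}
    (hu : Set.InjOn u (Set.Iio n)) (t : Set α) [DecidablePred (u · ∈ t)] :
    #{j ∈ range n | u j ∈ t} ≤ t.ncard := by
  classical
  rw [Set.ncard_eq_toFinset_card']
  refine card_le_card_of_injOn u (fun j hj => ?_) (fun j hj j' hj' => hu ?_ ?_)
  all_goals simp_all

namespace Setoid.IsPartition

variable {α : Type*} {Q : Set (Set α)} (hQ : Setoid.IsPartition Q)

noncomputable def part (a : α) : Set α := (hQ.2 a).choose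

theorem part_mem (a : α) : hQ.part a ∈ Q := (hQ.2 a).choose_spec.1.1

theorem mem_part (a : α) : a ∈ hQ.part a := (hQ.2 a).choose_spec.1.2

theorem part_eq_of_mem {q : Set α} (hq : q ∈ Q) {a : α} (ha : a ∈ q) : hQ.part a = q :=
  ((hQ.2 a).choose_spec.2 q ⟨hq, ha⟩).symm

theorem part_eq_iff_mem {a b : α} : hQ.part b = hQ.part a ↔ b ∈ hQ.part a :=
  ⟨fun h => h ▸ hQ.mem_part b, hQ.part_eq_of_mem (hQ.part_mem a)⟩

theorem forall_notMem_of_part_ne {a b : α} (h : hQ.part a ≠ hQ.part b) :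
    ∀ q ∈ Q, a ∈ q → b ∉ q := fun _ hq ha hb =>
  h ((hQ.part_eq_of_mem hq ha).trans (hQ.part_eq_of_mem hq hb).symm)

theorem card_filter_part_eq_le [Fintype α] {u : ℕ → α} {n : ℕ} (hu : Set.InjOn u (Set.Iio n))
    {v : α} (hv : ∀ j < n, u j ≠ v) [DecidablePred fun j => hQ.part (u j) = hQ.part v] :
    #{j ∈ range n | hQ.part (u j) = hQ.part v} ≤ (hQ.part v).ncard - 1 := by
  classical
  calc #{j ∈ range n | hQ.part (u j) = hQ.part v} = #{j ∈ range n | u j ∈ hQ.part v \ {v}} := by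
        congr 1
        refine filter_congr fun j hj => ?_
        simp [hQ.part_eq_iff_mem, hv j (mem_range.1 hj)]
    _ ≤ (hQ.part v \ {v}).ncard := card_filter_mem_le_ncard hu _
    _ = (hQ.part v).ncard - 1 := Set.ncard_sdiff_singleton_of_mem (hQ.mem_part v)

theorem exists_succ_parts_ne [Fintype α] {u : ℕ → α} {n k : ℕ} (hu : Set.InjOn u (Set.Iio n))
    {v₁ v₂ : α} (hv₁ : ∀ j < n, u j ≠ v₁) (hv₂ : ∀ j < n, u j ≠ v₂)
    (hQk : ∀ q ∈ Q, q.ncard ≤ k) (hk : 0 < k) (hn : (2 * k - 1) * (k + 1) ≤ n) :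
    ∃ j, j + 1 < n ∧ hQ.part v₁ ≠ hQ.part (u j) ∧ hQ.part v₁ ≠ hQ.part (u (j + 1)) ∧
      hQ.part v₂ ≠ hQ.part (u j) ∧ hQ.part v₂ ≠ hQ.part (u (j + 1)) ∧
      hQ.part (u j) ≠ hQ.part (u (j + 1)) := by
  classical
  have hforbidden :
      #{j ∈ range n | hQ.part (u j) ∈ ({hQ.part v₁, hQ.part v₂} : Set (Set α))} ≤ 2 * k - 2 :=
    calc _ ≤ #{j ∈ range n | hQ.part (u j) = hQ.part v₁} +
          #{j ∈ range n | hQ.part (u j) = hQ.part v₂} := by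
          simp only [Set.mem_insert_iff, Set.mem_singleton_iff, filter_or]
          exact card_union_le _ _
      _ ≤ (k - 1) + (k - 1) := add_le_add
          ((hQ.card_filter_part_eq_le hu hv₁).trans (Nat.sub_le_sub_right (hQk _ (part_mem _ _)) 1))
          ((hQ.card_filter_part_eq_le hu hv₂).trans (Nat.sub_le_sub_right (hQk _ (part_mem _ _)) 1))
      _ = 2 * k - 2 := by omega
  have hfibre : ∀ j < n, #{j' ∈ range n | hQ.part (u j') = hQ.part (u j)} ≤ k := fun j _ => by
    simp only [hQ.part_eq_iff_mem]
    exact (card_filter_mem_le_ncard hu _).trans (hQk _ (hQ.part_mem _))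
  obtain ⟨j, hj, h₁, h₂, h₁₂⟩ := exists_succ_ne_of_card_filter_le (fun j => hQ.part (u j)) _
    hforbidden hfibre (by rwa [show 2 * k - 2 + 1 = 2 * k - 1 by omega])
  simp only [Set.mem_insert_iff, Set.mem_singleton_iff, not_or] at h₁ h₂
  exact ⟨j, hj, Ne.symm h₁.1, Ne.symm h₂.1, Ne.symm h₁.2, Ne.symm h₂.2, h₁₂⟩

end Setoid.IsPartition

theorem Set.ncard_le_ncard_inter_add_ncard_inter {α : Type*} [Finite α] {s A B : Set α}
    (h : s ⊆ A ∪ B) : s.ncard ≤ (A ∩ s).ncard + (B ∩ s).ncard :=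
  calc s.ncard ≤ (A ∩ s ∪ B ∩ s).ncard :=
        Set.ncard_le_ncard fun w hw => (h hw).imp (⟨·, hw⟩) (⟨·, hw⟩)
    _ ≤ (A ∩ s).ncard + (B ∩ s).ncard := Set.ncard_union_le _ _

theorem Set.ncard_setOf_ne_and_ne_add_two {α : Type*} [Finite α] {a b : α} (h : a ≠ b) :
    {w | w ≠ a ∧ w ≠ b}.ncard + 2 = Nat.card α := by
  have hab : {w | w ≠ a ∧ w ≠ b} = ({a, b} : Set α)ᶜ := by ext; simp
  rw [hab, ← Set.ncard_pair h, Set.ncard_compl_add_ncard]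

theorem Contains.isContained {α β : Type} {H : SimpleGraph α} {G : SimpleGraph β}
    (h : Contains H G) : H ⊑ G :=
  let ⟨f, hf⟩ := h
  ⟨⟨⟨f, fun hab => hf hab⟩, f.injective⟩⟩

namespace IsTreePartition

variable {α : Type} {G : SimpleGraph α} {P : Set (Set α)}

theorem cliqueFree_three (hP : IsTreePartition G P) : (QuotientGraph G P).CliqueFree 3 :=
  let ⟨_, _, _, hT, hc⟩ := hP
  (hT.isAcyclic.cliqueFree le_rfl).comap hc.isContained

theorem part_eq_or_part_eq_of_adj (hP : IsTreePartition G P) {a b w : α}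
    (hsep : hP.1.part a ≠ hP.1.part b) (hab : G.Adj a b) (hwa : G.Adj w a) (hwb : G.Adj w b) :
    hP.1.part w = hP.1.part a ∨ hP.1.part w = hP.1.part b := by
  classical
  by_contra! hne
  apply hP.cliqueFree_three {⟨_, hP.1.part_mem a⟩, ⟨_, hP.1.part_mem b⟩, ⟨_, hP.1.part_mem w⟩}
  rw [is3Clique_triple_iff]
  refine ⟨⟨?_, a, hP.1.mem_part a, b, hP.1.mem_part b, hab⟩,
    ⟨?_, a, hP.1.mem_part a, w, hP.1.mem_part w, hwa.symm⟩,
    ⟨?_, b, hP.1.mem_part b, w, hP.1.mem_part w, hwb.symm⟩⟩ <;>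
    simp only [ne_eq, Subtype.mk.injEq] <;> tauto

theorem mem_part_or_mem_part_of_dominant (hP : IsTreePartition G P) {v₁ v₂ : α}
    (hdom₁ : ∀ w, w ≠ v₁ → G.Adj v₁ w) (hdom₂ : ∀ w, w ≠ v₂ → G.Adj v₂ w)
    (hsep : hP.1.part v₁ ≠ hP.1.part v₂) (w : α) : w ∈ hP.1.part v₁ ∪ hP.1.part v₂ := by
  by_cases hw₁ : w = v₁
  · exact .inl (hw₁ ▸ hP.1.mem_part v₁)
  by_cases hw₂ : w = v₂
  · exact .inr (hw₂ ▸ hP.1.mem_part v₂)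
  have hne : v₁ ≠ v₂ := fun h => hsep (h ▸ rfl)
  rw [Set.mem_union, ← hP.1.part_eq_iff_mem, ← hP.1.part_eq_iff_mem]
  exact hP.part_eq_or_part_eq_of_adj hsep (hdom₁ v₂ hne.symm) (hdom₁ w hw₁).symm
    (hdom₂ w hw₂).symm

end IsTreePartition

theorem exists_seq_of_iso_pathGraph {V : Type*} [Nonempty V] {G : SimpleGraph V} {S : Set V}
    {n : ℕ} (e : G.induce S ≃g pathGraph n) :
    ∃ u : ℕ → V, Set.InjOn u (Set.Iio n) ∧ (∀ j < n, u j ∈ S) ∧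
      ∀ j, j + 1 < n → G.Adj (u j) (u (j + 1)) := by
  refine ⟨fun j => if h : j < n then e.symm ⟨j, h⟩ else Classical.arbitrary V, ?_, ?_, ?_⟩
  · intro j (hj : j < n) j' (hj' : j' < n) h
    simp only [dif_pos hj, dif_pos hj'] at h
    simpa using e.symm.injective (Subtype.val_injective h)
  · intro j hj
    simp only [dif_pos hj]
    exact (e.symm _).2
  · intro j hj
    simp only [dif_pos hj, dif_pos (Nat.lt_of_succ_lt hj)]
    exact e.symm.map_adj_iff.2 (pathGraph_adj.2 (Or.inl rfl))

/-- For a double-fan `F` on at least `8c² + 2c + 1` vertices with centres `v₁, v₂`, and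
partitions `𝒫, 𝒬` of `F` with `𝒫` a tree-partition and `|P ∩ Q| ≤ c` for all `P ∈ 𝒫`,
`Q ∈ 𝒬`: if `v₁, v₂` lie in distinct parts of `𝒫` and of `𝒬`, then there are vertices
`v₃, v₄` such that `{v₁, v₂, v₃, v₄}` is a `4`-clique whose vertices lie in pairwise
distinct parts of `𝒬`. -/
theorem stmt11 {V : Type} [Fintype V] (c : ℕ) (hc : 1 ≤ c)
    (F : SimpleGraph V) (hcard : 8 * c ^ 2 + 2 * c + 1 ≤ Fintype.card V)
    (v₁ v₂ : V) (hne : v₁ ≠ v₂)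
    (hdom₁ : ∀ w, w ≠ v₁ → F.Adj v₁ w) (hdom₂ : ∀ w, w ≠ v₂ → F.Adj v₂ w)
    (hpath : IsPathGraph (F.induce {w | w ≠ v₁ ∧ w ≠ v₂}))
    (P Q : Set (Set V)) (hP : IsTreePartition F P) (hQ : Setoid.IsPartition Q)
    (hPQ : ∀ p ∈ P, ∀ q ∈ Q, (p ∩ q).ncard ≤ c)
    (hPsep : ∀ p ∈ P, v₁ ∈ p → v₂ ∉ p) (hQsep : ∀ q ∈ Q, v₁ ∈ q → v₂ ∉ q) :
    ∃ v₃ v₄, F.Adj v₁ v₂ ∧ F.Adj v₁ v₃ ∧ F.Adj v₁ v₄ ∧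
      F.Adj v₂ v₃ ∧ F.Adj v₂ v₄ ∧ F.Adj v₃ v₄ ∧
      (∀ q ∈ Q, v₁ ∈ q → v₂ ∉ q) ∧ (∀ q ∈ Q, v₁ ∈ q → v₃ ∉ q) ∧
      (∀ q ∈ Q, v₁ ∈ q → v₄ ∉ q) ∧ (∀ q ∈ Q, v₂ ∈ q → v₃ ∉ q) ∧
      (∀ q ∈ Q, v₂ ∈ q → v₄ ∉ q) ∧ (∀ q ∈ Q, v₃ ∈ q → v₄ ∉ q) := by
  have : Nonempty V := ⟨v₁⟩
  obtain ⟨n, ⟨e⟩⟩ := hpath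
  obtain ⟨u, hu_inj, hu_mem, hu_adj⟩ := exists_seq_of_iso_pathGraph e
  have hn : n + 2 = Fintype.card V := by
    rw [← Nat.card_eq_fintype_card, ← Set.ncard_setOf_ne_and_ne_add_two hne,
      ← Nat.card_coe_set_eq, Nat.card_congr e.toEquiv, Nat.card_eq_fintype_card, Fintype.card_fin]
  have hsep₁₂ : hP.1.part v₁ ≠ hP.1.part v₂ := fun h =>
    hPsep _ (hP.1.part_mem v₁) (hP.1.mem_part v₁) (h ▸ hP.1.mem_part v₂)
  have hQsmall : ∀ q ∈ Q, q.ncard ≤ 2 * c := fun q hq =>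
    (Set.ncard_le_ncard_inter_add_ncard_inter fun w _ =>
      hP.mem_part_or_mem_part_of_dominant hdom₁ hdom₂ hsep₁₂ w).trans
    (by linarith [hPQ _ (hP.1.part_mem v₁) q hq, hPQ _ (hP.1.part_mem v₂) q hq])
  have hlong : (2 * (2 * c) - 1) * (2 * c + 1) ≤ n := by
    obtain ⟨d, rfl⟩ : ∃ d, c = d + 1 := ⟨c - 1, by omega⟩
    rw [show 2 * (2 * (d + 1)) - 1 = 4 * d + 3 by omega]
    nlinarith
  obtain ⟨j, hj, h₁₃, h₁₄, h₂₃, h₂₄, h₃₄⟩ := hQ.exists_succ_parts_ne hu_inj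
    (fun j hj => (hu_mem j hj).1) (fun j hj => (hu_mem j hj).2) hQsmall (by omega) hlong
  have hj' : j < n := by omega
  exact ⟨u j, u (j + 1), hdom₁ v₂ hne.symm, hdom₁ _ (hu_mem j hj').1,
    hdom₁ _ (hu_mem (j + 1) hj).1, hdom₂ _ (hu_mem j hj').2, hdom₂ _ (hu_mem (j + 1) hj).2,
    hu_adj j hj, hQsep, hQ.forall_notMem_of_part_ne h₁₃, hQ.forall_notMem_of_part_ne h₁₄,
    hQ.forall_notMem_of_part_ne h₂₃, hQ.forall_notMem_of_part_ne h₂₄,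
    hQ.forall_notMem_of_part_ne h₃₄⟩
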